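/- Let (H, M) be a Hilbert module. Then B₀(H,H) = B₀ˡ(H,H) ∩ B₀ʳ(H,H) is a C*-subalgebra of B(H), and an operator S ∈ B(H) belongs to B₀(H,H) if and only if there exist M, N ∈ M and T ∈ B(H) such that S = M∘T∘N. -/

import Mathlib

open ContinuousLinearMap

noncomputable section

variable {H K : Type*}

/-- `M` is the multiplier algebra of a Banach module structure on `H`: a non-degenerate
norm-closed subalgebra of `B(H)` possessing a bounded approximate unit. -/
structure IsBanachModule (H : Type*) [NormedAddCommGroup H] [NormedSpace ℂ H]
    (M : Set (H →L[ℂ] H)) : Prop where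
  zero_mem : (0 : H →L[ℂ] H) ∈ M
  add_mem : ∀ {A B : H →L[ℂ] H}, A ∈ M → B ∈ M → A + B ∈ M
  smul_mem : ∀ (c : ℂ) {A : H →L[ℂ] H}, A ∈ M → c • A ∈ M
  mul_mem : ∀ {A B : H →L[ℂ] H}, A ∈ M → B ∈ M → A.comp B ∈ M
  isClosed : IsClosed M
  nondegenerate : Dense (↑(Submodule.span ℂ {u : H | ∃ A ∈ M, ∃ v : H, u = A v}) : Set H)
  approx_unit : ∃ C : ℝ, ∀ ε > (0 : ℝ), ∀ F : Finset (H →L[ℂ] H), ↑F ⊆ M →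
    ∃ J ∈ M, ‖J‖ ≤ C ∧ ∀ A ∈ F, ‖J.comp A - A‖ ≤ ε ∧ ‖A.comp J - A‖ ≤ ε

/-- A Hilbert module: a Banach module on a Hilbert space whose multiplier algebra is a
C*-algebra of operators (i.e. is moreover closed under adjoints). -/
structure IsHilbertModule (H : Type*) [NormedAddCommGroup H] [InnerProductSpace ℂ H]
    [CompleteSpace H] (M : Set (H →L[ℂ] H)) extends IsBanachModule H M : Prop where
  star_mem : ∀ {A : H →L[ℂ] H}, A ∈ M → ContinuousLinearMap.adjoint A ∈ M

/-- `B₀ˡ(H,K)`: the closed linear span of the operators `A ∘ T` with `A` in the multiplier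
algebra of `K` and `T ∈ B(H,K)` (operators left vanishing at infinity). -/
def B0l [NormedAddCommGroup H] [NormedSpace ℂ H] [NormedAddCommGroup K] [NormedSpace ℂ K]
    (MK : Set (K →L[ℂ] K)) : Set (H →L[ℂ] K) :=
  closure (↑(Submodule.span ℂ
    {S : H →L[ℂ] K | ∃ A ∈ MK, ∃ T : H →L[ℂ] K, S = A.comp T}) : Set (H →L[ℂ] K))

/-- `B₀ʳ(H,K)`: the closed linear span of the operators `T ∘ A` with `A` in the multiplier
algebra of `H` and `T ∈ B(H,K)` (operators right vanishing at infinity). -/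
def B0r [NormedAddCommGroup H] [NormedSpace ℂ H] [NormedAddCommGroup K] [NormedSpace ℂ K]
    (MH : Set (H →L[ℂ] H)) : Set (H →L[ℂ] K) :=
  closure (↑(Submodule.span ℂ
    {S : H →L[ℂ] K | ∃ A ∈ MH, ∃ T : H →L[ℂ] K, S = T.comp A}) : Set (H →L[ℂ] K))

/-- `S ∈ B(H,K)` is left decay preserving. -/
def LeftDecayPreserving [NormedAddCommGroup H] [NormedSpace ℂ H] [NormedAddCommGroup K]
    [NormedSpace ℂ K] (MH : Set (H →L[ℂ] H)) (MK : Set (K →L[ℂ] K))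
    (S : H →L[ℂ] K) : Prop :=
  ∀ A ∈ MH, S.comp A ∈ B0l MK

/-- `S ∈ B(H,K)` is right decay preserving. -/
def RightDecayPreserving [NormedAddCommGroup H] [NormedSpace ℂ H] [NormedAddCommGroup K]
    [NormedSpace ℂ K] (MH : Set (H →L[ℂ] H)) (MK : Set (K →L[ℂ] K))
    (S : H →L[ℂ] K) : Prop :=
  ∀ A ∈ MK, A.comp S ∈ B0r MH

/-!
`B₀ˡ` and `B₀ʳ` are closed subspaces of `B(H)`, a right and a left ideal respectively, and since
`M` is self-adjoint the adjoint exchanges them; so `B₀ˡ ∩ B₀ʳ` is a C*-subalgebra.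

For the factorization, the bounded approximate unit `(eᵢ)` of `M` acts as a left approximate unit
on all of `B₀ˡ`: the set of `x` with `eᵢ x → x` is a right ideal containing `M`, and it is closed
because the maps `x ↦ eᵢ x` are uniformly Lipschitz. Cohen's factorization theorem then writes
`S ∈ B₀ˡ` as `S = a y` with `a ∈ M` and `y` in the closed left ideal generated by `S`. If moreover
`S ∈ B₀ʳ`, then `y ∈ B₀ʳ`, so `y* ∈ B₀ˡ` factors as `y* = b w` and `S = a w* b*`.

Cohen's construction, with `D = C + ‖1‖` and `γ = 1 / (2 (D + 1))`: starting from `u₀ = 1`, put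
`uₙ₊₁ = uₙ + γ (1 - γ)ⁿ (eₙ - 1)`. The invariant that `eᵢ` acts as a left unit on
`zₙ = 1 - (1 - γ)ⁿ uₙ⁻¹` lets `eₙ` be chosen, nearly a left unit on `x`, `zₙ` and `zₙ x`, so
that `uₙ₊₁ uₙ⁻¹ = 1 - s` with `‖s‖ ≤ 1/2`, keeping `uₙ₊₁` invertible, and so that `uₙ⁻¹ x`
moves by at most `2⁻ⁿ`. Then `uₙ → a ∈ M`, `uₙ⁻¹ x → y`, and `x = a y`.
-/

open Filter Topology Set
open scoped NNReal

section LeftUnitLocus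

variable {ι A : Type*} [NormedRing A]

variable (𝕜 : Type*) [Semiring 𝕜] [Module 𝕜 A] [ContinuousConstSMul 𝕜 A] [SMulCommClass 𝕜 A A]

def leftUnitLocus (l : Filter ι) (e : ι → A) : Submodule 𝕜 A where
  carrier := {x | Tendsto (fun i => e i * x) l (𝓝 x)}
  zero_mem' := by simp [tendsto_const_nhds]
  add_mem' {x y} hx hy := by simpa only [Set.mem_ofPred_eq, mul_add] using hx.add hy
  smul_mem' c x hx := by simpa only [Set.mem_ofPred_eq, mul_smul_comm] using hx.const_smul c

variable {𝕜} {l : Filter ι} {e : ι → A}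

theorem mem_leftUnitLocus {x : A} :
    x ∈ leftUnitLocus 𝕜 l e ↔ Tendsto (fun i => e i * x) l (𝓝 x) := Iff.rfl

theorem mul_mem_leftUnitLocus {x : A} (hx : x ∈ leftUnitLocus 𝕜 l e) (a : A) :
    x * a ∈ leftUnitLocus 𝕜 l e := by
  simpa only [mem_leftUnitLocus, ← mul_assoc] using hx.mul_const a

theorem isClosed_leftUnitLocus {C : ℝ≥0} (hC : ∀ i, ‖e i‖ ≤ C) :
    IsClosed (leftUnitLocus 𝕜 l e : Set A) := by
  have hlip : ∀ i, LipschitzWith C (e i * ·) := fun i =>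
    LipschitzWith.of_dist_le_mul fun x y => by
      rw [dist_eq_norm, dist_eq_norm, ← mul_sub]
      exact (norm_mul_le _ _).trans (mul_le_mul_of_nonneg_right (hC i) (norm_nonneg _))
  exact (LipschitzWith.uniformEquicontinuous _ C hlip).equicontinuous.isClosed_setOfPred_tendsto
    continuous_id

theorem closure_span_mul_subset_leftUnitLocus {C : ℝ≥0} (hC : ∀ i, ‖e i‖ ≤ C) {M : Set A}
    (hM : M ⊆ leftUnitLocus 𝕜 l e) :
    closure (Submodule.span 𝕜 {x | ∃ m ∈ M, ∃ a, x = m * a} : Set A) ⊆ leftUnitLocus 𝕜 l e :=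
  closure_minimal
    (Submodule.span_le.2 <| by rintro _ ⟨m, hm, a, rfl⟩; exact mul_mem_leftUnitLocus (hM hm) a)
    (isClosed_leftUnitLocus hC)

end LeftUnitLocus

theorem exists_seq_of_forall_exists_succ {α : Type*} {P : ℕ → α → Prop} {R : ℕ → α → α → Prop}
    {a : α} (h₀ : P 0 a) (h : ∀ n a, P n a → ∃ b, P (n + 1) b ∧ R n a b) :
    ∃ f : ℕ → α, (∀ n, P n (f n)) ∧ ∀ n, R n (f n) (f (n + 1)) := by
  choose! g hgP hgR using h
  let f : ℕ → α := fun n => Nat.rec a g n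
  have hf : ∀ n, P n (f n) := fun n => Nat.rec h₀ (fun n ih => hgP n _ ih) n
  exact ⟨f, hf, fun n => hgR n _ (hf n)⟩

theorem norm_inv_oneSub_le {A : Type*} [NormedRing A] [HasSummableGeomSeries A] {t : A}
    (ht : ‖t‖ ≤ 1 / 2) :
    ‖(↑(Units.oneSub t (ht.trans_lt one_half_lt_one))⁻¹ : A)‖ ≤ ‖(1 : A)‖ + 1 := by
  refine (tsum_geometric_le_of_norm_lt_one t (ht.trans_lt one_half_lt_one)).trans ?_
  have : (1 - ‖t‖)⁻¹ ≤ 2 := by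
    rw [inv_le_comm₀ (by linarith) two_pos]; linarith
  linarith

section Cohen

variable {A : Type*} [NormedRing A] [NormedAlgebra ℝ A]

def CohenInvariant (M L : Set A) (c : ℝ) (u : Aˣ) : Prop :=
  (u : A) - c • 1 ∈ M ∧ 1 - c • (↑u⁻¹ : A) ∈ L

theorem norm_cohen_perturbation_le {γ c D ε : ℝ} (hγ : 0 ≤ γ) (hγD : γ * (D + 1) ≤ 1 / 2)
    (hε : ε ≤ 1) {w x z e : A} (hz : c • w = 1 - z) (heD : ‖1 - e‖ ≤ D) (hex : ‖e * x - x‖ ≤ ε)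
    (hez : ‖e * z - z‖ ≤ ε) (hezx : ‖e * (z * x) - z * x‖ ≤ ε) :
    ‖(γ * c) • ((1 - e) * w)‖ ≤ 1 / 2 ∧ ‖(γ * c) • ((1 - e) * w) * x‖ ≤ ε := by
  have hs : (γ * c) • ((1 - e) * w) = γ • ((1 - e) + (e * z - z)) := by
    rw [mul_smul, ← mul_smul_comm, hz]; congr 1; noncomm_ring
  have hγ2 : γ ≤ 1 / 2 := by nlinarith [(norm_nonneg _).trans heD]
  rw [hs, smul_mul_assoc, norm_smul, norm_smul, Real.norm_of_nonneg hγ]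
  constructor
  · calc γ * ‖(1 - e) + (e * z - z)‖ ≤ γ * (D + 1) := by
          gcongr; exact (norm_add_le _ _).trans (add_le_add heD (hez.trans hε))
      _ ≤ 1 / 2 := hγD
  · have : (1 - e + (e * z - z)) * x = (e * (z * x) - z * x) - (e * x - x) := by noncomm_ring
    calc γ * ‖(1 - e + (e * z - z)) * x‖ ≤ 1 / 2 * (ε + ε) := by
          rw [this]; gcongr; exact (norm_sub_le _ _).trans (add_le_add hezx hex)
      _ = ε := by ring

theorem cohen_step [HasSummableGeomSeries A] {M L : Submodule ℝ A} (hL : ∀ z ∈ L, ∀ b, z * b ∈ L)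
    (hML : ∀ m ∈ M, ∀ b, m * b ∈ L) {γ c D ε : ℝ} (hγ : 0 ≤ γ) (hγD : γ * (D + 1) ≤ 1 / 2)
    (hc : 0 ≤ c) (hε : ε ≤ 1) {u : Aˣ} (hu : CohenInvariant M L c u) {x e : A} (heM : e ∈ M)
    (heD : ‖1 - e‖ ≤ D) (hex : ‖e * x - x‖ ≤ ε)
    (hez : ‖e * (1 - c • ↑u⁻¹) - (1 - c • ↑u⁻¹)‖ ≤ ε)
    (hezx : ‖e * ((1 - c • ↑u⁻¹) * x) - (1 - c • ↑u⁻¹) * x‖ ≤ ε) :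
    ∃ v : Aˣ, CohenInvariant M L ((1 - γ) * c) v ∧ ‖(v : A) - u‖ ≤ γ * c * D ∧
      ‖↑v⁻¹ * x - ↑u⁻¹ * x‖ ≤ ‖(↑u⁻¹ : A)‖ * ((‖(1 : A)‖ + 1) * ε) := by
  set s : A := (γ * c) • ((1 - e) * ↑u⁻¹) with hs_def
  obtain ⟨hs, hsx⟩ :=
    norm_cohen_perturbation_le hγ hγD hε (sub_sub_cancel _ _).symm heD hex hez hezx
  set w := Units.oneSub s (hs.trans_lt one_half_lt_one)
  have hw : (w : A) = 1 - s := Units.val_oneSub _ _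
  have hv : ((w * u : Aˣ) : A) = u - (γ * c) • (1 - e) := by
    rw [Units.val_mul, hw, sub_mul, one_mul, hs_def, smul_mul_assoc, mul_assoc, u.inv_mul, mul_one]
  refine ⟨w * u, ⟨?_, ?_⟩, ?_, ?_⟩
  · have : ((w * u : Aˣ) : A) - ((1 - γ) * c) • 1 = ((u : A) - c • 1) + (γ * c) • e := by
      rw [hv]; module
    rw [this]; exact M.add_mem hu.1 (M.smul_mem _ heM)
  · have : 1 - ((1 - γ) * c) • (↑(w * u)⁻¹ : A)
        = ((1 - c • ↑u⁻¹) + (γ * c) • (e * ↑u⁻¹)) * ↑w⁻¹ := by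
      nth_rw 1 [← w.mul_inv]
      rw [mul_inv_rev, Units.val_mul, ← smul_mul_assoc, hw, ← sub_mul, hs_def]
      refine congrArg (· * _) ?_
      rw [sub_mul, one_mul, smul_sub]; module
    rw [this]; exact hL _ (L.add_mem hu.2 (L.smul_mem _ (hML e heM _))) _
  · rw [hv, sub_sub_cancel_left, norm_neg, norm_smul, Real.norm_of_nonneg (by positivity)]
    gcongr
  · have : ↑(w * u)⁻¹ * x - ↑u⁻¹ * x = ↑u⁻¹ * (↑w⁻¹ * (s * x)) := by
      have h := w.inv_mul
      rw [hw, mul_sub, mul_one, sub_eq_iff_eq_add] at h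
      rw [mul_inv_rev, Units.val_mul, mul_assoc, ← mul_sub, ← mul_assoc _ s,
        ← sub_eq_iff_eq_add'.2 h, sub_mul, one_mul]
    rw [this]
    calc ‖(↑u⁻¹ : A) * (↑w⁻¹ * (s * x))‖ ≤ ‖(↑u⁻¹ : A)‖ * (‖(↑w⁻¹ : A)‖ * ‖s * x‖) := by
          refine (norm_mul_le _ _).trans ?_; gcongr; exact norm_mul_le _ _
      _ ≤ ‖(↑u⁻¹ : A)‖ * ((‖(1 : A)‖ + 1) * ε) := by gcongr; exact norm_inv_oneSub_le hs

theorem exists_cohen_step [HasSummableGeomSeries A] {ι : Type*} {l : Filter ι} [l.NeBot]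
    {M : Submodule ℝ A} {e : ι → A} {C : ℝ≥0} (heM : ∀ i, e i ∈ M) (heC : ∀ i, ‖e i‖ ≤ C)
    (he : ∀ m ∈ M, Tendsto (fun i => e i * m) l (𝓝 m)) {x : A}
    (hx : Tendsto (fun i => e i * x) l (𝓝 x)) {γ c : ℝ} (hγ : 0 ≤ γ)
    (hγD : γ * (C + ‖(1 : A)‖ + 1) ≤ 1 / 2) (hc : 0 ≤ c) {u : Aˣ}
    (hu : CohenInvariant M (leftUnitLocus ℝ l e) c u) {δ : ℝ} (hδ : 0 < δ) :
    ∃ v : Aˣ, CohenInvariant M (leftUnitLocus ℝ l e) ((1 - γ) * c) v ∧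
      ‖(v : A) - u‖ ≤ γ * c * (C + ‖(1 : A)‖) ∧ ‖(↑v⁻¹ : A) * x - ↑u⁻¹ * x‖ ≤ δ := by
  set K := ‖(↑u⁻¹ : A)‖ * (‖(1 : A)‖ + 1)
  set ε := min 1 (δ / (K + 1))
  have hε : 0 < ε := by positivity
  have hKε : K * ε ≤ δ :=
    calc K * ε ≤ (K + 1) * (δ / (K + 1)) := by gcongr; linarith; exact min_le_right _ _
      _ = δ := mul_div_cancel₀ _ (by positivity)
  have hz : 1 - c • (↑u⁻¹ : A) ∈ leftUnitLocus ℝ l e := hu.2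
  obtain ⟨i, hex, hez, hezx⟩ := ((Metric.tendsto_nhds.1 hx ε hε).and
    ((Metric.tendsto_nhds.1 hz ε hε).and
      (Metric.tendsto_nhds.1 (mul_mem_leftUnitLocus hz x) ε hε))).exists
  rw [dist_eq_norm] at hex hez hezx
  obtain ⟨v, hv, hvu, hvx⟩ := cohen_step (fun z hz b => mul_mem_leftUnitLocus hz b)
    (fun m hm b => mul_mem_leftUnitLocus (he m hm) b) hγ hγD hc (min_le_left _ _) hu (heM i)
    ((norm_sub_le _ _).trans (by linarith [heC i])) hex.le hez.le hezx.le
  exact ⟨v, hv, hvu, hvx.trans (by rw [← mul_assoc]; exact hKε)⟩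

theorem cohen_factorization [CompleteSpace A] {ι : Type*} {l : Filter ι} [l.NeBot]
    {M : Submodule ℝ A} (hM : IsClosed (M : Set A)) {e : ι → A} {C : ℝ≥0} (heM : ∀ i, e i ∈ M)
    (heC : ∀ i, ‖e i‖ ≤ C) (he : ∀ m ∈ M, Tendsto (fun i => e i * m) l (𝓝 m)) {x : A}
    (hx : Tendsto (fun i => e i * x) l (𝓝 x)) :
    ∃ a ∈ M, ∃ y ∈ closure (range (· * x)), x = a * y := by
  set D : ℝ := C + ‖(1 : A)‖
  set γ : ℝ := 1 / (2 * (D + 1))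
  have hD : 0 ≤ D := by positivity
  have hγ : 0 < γ := by positivity
  have hγD : γ * (D + 1) = 1 / 2 := by simp only [γ]; field_simp
  have hγ1 : γ < 1 := by nlinarith
  obtain ⟨u, hu, hdist⟩ := exists_seq_of_forall_exists_succ (a := 1)
    (P := fun n => CohenInvariant M (leftUnitLocus ℝ l e) ((1 - γ) ^ n))
    (R := fun n (u v : Aˣ) => ‖(v : A) - u‖ ≤ γ * D * (1 - γ) ^ n ∧
      ‖(↑v⁻¹ : A) * x - ↑u⁻¹ * x‖ ≤ 1 * (1 / 2) ^ n)
    (by simp [CohenInvariant]) fun n w hw => by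
      obtain ⟨v, hv, hvu, hvx⟩ := exists_cohen_step heM heC he hx hγ.le hγD.le (by positivity) hw
        (δ := 1 * (1 / 2) ^ n) (by positivity)
      exact ⟨v, by rwa [pow_succ'], hvu.trans_eq (by ring), hvx⟩
  have hu_cauchy : CauchySeq fun n => (u n : A) :=
    cauchySeq_of_le_geometric (1 - γ) (γ * D) (by linarith) fun n => by
      rw [dist_comm, dist_eq_norm]; exact (hdist n).1
  have hy_cauchy : CauchySeq fun n => (↑(u n)⁻¹ : A) * x :=
    cauchySeq_of_le_geometric (1 / 2) 1 (by norm_num) fun n => by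
      rw [dist_comm, dist_eq_norm]; exact (hdist n).2
  obtain ⟨a, ha⟩ := cauchySeq_tendsto_of_complete hu_cauchy
  obtain ⟨y, hy⟩ := cauchySeq_tendsto_of_complete hy_cauchy
  refine ⟨a, ?_, y, mem_closure_of_tendsto hy (Eventually.of_forall fun n => ⟨_, rfl⟩), ?_⟩
  · have hpow := tendsto_pow_atTop_nhds_zero_of_lt_one (r := 1 - γ) (by linarith) (by linarith)
    have : Tendsto (fun n => (u n : A) - (1 - γ) ^ n • 1) atTop (𝓝 a) := by
      simpa using ha.sub (hpow.smul_const (1 : A))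
    exact hM.mem_of_tendsto this (Eventually.of_forall fun n => (hu n).1)
  · have : Tendsto (fun n => (u n : A) * (↑(u n)⁻¹ * x)) atTop (𝓝 (a * y)) := ha.mul hy
    simp only [← mul_assoc, Units.mul_inv, one_mul] at this
    exact tendsto_nhds_unique tendsto_const_nhds this

end Cohen

theorem exists_tendsto_mul_of_approxUnit {A : Type*} [NormedRing A] {M : Set A} {C : ℝ}
    (h : ∀ ε > (0 : ℝ), ∀ F : Finset A, ↑F ⊆ M → ∃ J ∈ M, ‖J‖ ≤ C ∧ ∀ m ∈ F, ‖J * m - m‖ ≤ ε) :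
    ∃ e : Finset M × ℕ → A, (∀ p, e p ∈ M) ∧ (∀ p, ‖e p‖ ≤ C.toNNReal) ∧
      ∀ m ∈ M, Tendsto (fun p => e p * m) atTop (𝓝 m) := by
  classical
  choose! J hJM hJC hJF using h
  have hF : ∀ F : Finset M, ↑(F.map (Function.Embedding.subtype _)) ⊆ M := fun F x hx => by
    obtain ⟨y, -, rfl⟩ := Finset.mem_map.1 hx; exact y.2
  refine ⟨fun p => J (1 / (p.2 + 1)) (p.1.map (Function.Embedding.subtype _)),
    fun p => hJM _ (by positivity) _ (hF _),
    fun p => (hJC _ (by positivity) _ (hF _)).trans (Real.le_coe_toNNReal C), fun m hm => ?_⟩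
  rw [Metric.tendsto_atTop]
  intro δ hδ
  obtain ⟨k, hk⟩ := exists_nat_one_div_lt hδ
  refine ⟨({⟨m, hm⟩}, k), fun p hp => ?_⟩
  rw [dist_eq_norm]
  calc _ ≤ 1 / ((p.2 : ℝ) + 1) := hJF _ (by positivity) _ (hF _) m
          (Finset.mem_map.2 ⟨⟨m, hm⟩, hp.1 (Finset.mem_singleton_self _), rfl⟩)
    _ ≤ 1 / ((k : ℝ) + 1) := Nat.one_div_le_one_div hp.2
    _ < δ := hk

section OperatorIdeals

variable {H' K' : Type*} [NormedAddCommGroup H] [NormedSpace ℂ H] [NormedAddCommGroup H']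
  [NormedSpace ℂ H'] [NormedAddCommGroup K] [NormedSpace ℂ K] [NormedAddCommGroup K']
  [NormedSpace ℂ K']

-- The carriers of `B0lSubmodule MK` and `B0rSubmodule MH` are `B0l MK` and `B0r MH` by definition.
def B0lSubmodule (MK : Set (K →L[ℂ] K)) : Submodule ℂ (H →L[ℂ] K) :=
  (Submodule.span ℂ {S : H →L[ℂ] K | ∃ A ∈ MK, ∃ T : H →L[ℂ] K, S = A.comp T}).topologicalClosure

def B0rSubmodule (MH : Set (H →L[ℂ] H)) : Submodule ℂ (H →L[ℂ] K) :=
  (Submodule.span ℂ {S : H →L[ℂ] K | ∃ A ∈ MH, ∃ T : H →L[ℂ] K, S = T.comp A}).topologicalClosure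

theorem comp_mem_B0l {MK : Set (K →L[ℂ] K)} {x : H →L[ℂ] K} (hx : x ∈ B0l MK) (r : H' →L[ℂ] H) :
    x.comp r ∈ B0l (H := H') MK :=
  (Submodule.mapsTo_span (f := ((compL ℂ H' H K).flip r : (H →L[ℂ] K) →ₗ[ℂ] (H' →L[ℂ] K)))
    (by rintro _ ⟨A, hA, T, rfl⟩; exact ⟨A, hA, T.comp r, comp_assoc _ _ _⟩)).closure
    ((compL ℂ H' H K).flip r).continuous hx

theorem comp_mem_B0r {MH : Set (H →L[ℂ] H)} {x : H →L[ℂ] K} (hx : x ∈ B0r MH) (r : K →L[ℂ] K') :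
    r.comp x ∈ B0r (K := K') MH :=
  (Submodule.mapsTo_span (f := (compL ℂ H K K' r : (H →L[ℂ] K) →ₗ[ℂ] (H →L[ℂ] K')))
    (by rintro _ ⟨A, hA, T, rfl⟩; exact ⟨A, hA, r.comp T, (comp_assoc _ _ _).symm⟩)).closure
    (compL ℂ H K K' r).continuous hx

end OperatorIdeals

section Adjoint

variable [NormedAddCommGroup H] [InnerProductSpace ℂ H] [CompleteSpace H] [NormedAddCommGroup K]
  [InnerProductSpace ℂ K] [CompleteSpace K]

theorem adjoint_mem_B0r {MK : Set (K →L[ℂ] K)} (hMK : ∀ A ∈ MK, adjoint A ∈ MK)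
    {x : H →L[ℂ] K} (hx : x ∈ B0l MK) : adjoint x ∈ B0r (K := H) MK :=
  (Submodule.mapsTo_span (f := (adjoint (𝕜 := ℂ) (E := H) (F := K)).toLinearEquiv.toLinearMap)
    (by rintro _ ⟨A, hA, T, rfl⟩; exact ⟨adjoint A, hMK A hA, adjoint T, adjoint_comp _ _⟩)).closure
    adjoint.continuous hx

theorem adjoint_mem_B0l {MH : Set (H →L[ℂ] H)} (hMH : ∀ A ∈ MH, adjoint A ∈ MH)
    {x : H →L[ℂ] K} (hx : x ∈ B0r MH) : adjoint x ∈ B0l (H := K) MH :=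
  (Submodule.mapsTo_span (f := (adjoint (𝕜 := ℂ) (E := H) (F := K)).toLinearEquiv.toLinearMap)
    (by rintro _ ⟨A, hA, T, rfl⟩; exact ⟨adjoint A, hMH A hA, adjoint T, adjoint_comp _ _⟩)).closure
    adjoint.continuous hx

end Adjoint

def IsBanachModule.toSubmodule [NormedAddCommGroup H] [NormedSpace ℂ H] {M : Set (H →L[ℂ] H)}
    (hM : IsBanachModule H M) : Submodule ℂ (H →L[ℂ] H) where
  carrier := M
  zero_mem' := hM.zero_mem
  add_mem' := hM.add_mem
  smul_mem' := hM.smul_mem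

theorem IsBanachModule.exists_eq_mul_of_mem_B0l [NormedAddCommGroup H] [NormedSpace ℂ H]
    [CompleteSpace H] {M : Set (H →L[ℂ] H)} (hM : IsBanachModule H M) {x : H →L[ℂ] H}
    (hx : x ∈ B0l M) : ∃ a ∈ M, ∃ y ∈ closure (range (· * x)), x = a * y := by
  -- `classical` provides the `DecidableEq` behind the directed order on `Finset M`
  classical
  obtain ⟨C, hC⟩ := hM.approx_unit
  obtain ⟨e, heM, heC, he⟩ := exists_tendsto_mul_of_approxUnit (M := M) fun ε hε F hF => by
    obtain ⟨J, hJ, hJC, hJF⟩ := hC ε hε F hF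
    exact ⟨J, hJ, hJC, fun m hm => (hJF m hm).1⟩
  exact cohen_factorization (M := hM.toSubmodule.restrictScalars ℝ) hM.isClosed heM heC he
    (closure_span_mul_subset_leftUnitLocus (𝕜 := ℂ) heC he hx)

theorem IsHilbertModule.mem_B0l_inter_B0r_iff [NormedAddCommGroup H] [InnerProductSpace ℂ H]
    [CompleteSpace H] {M : Set (H →L[ℂ] H)} (hM : IsHilbertModule H M) {S : H →L[ℂ] H} :
    S ∈ B0l M ∩ B0r M ↔ ∃ A ∈ M, ∃ B ∈ M, ∃ T : H →L[ℂ] H, S = A.comp (T.comp B) := by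
  have hstar : ∀ A ∈ M, adjoint A ∈ M := fun A hA => hM.star_mem hA
  constructor
  · rintro ⟨hSl, hSr⟩
    obtain ⟨a, haM, y, hy, rfl⟩ := hM.exists_eq_mul_of_mem_B0l hSl
    have hyr : y ∈ B0r M :=
      closure_minimal (by rintro _ ⟨r, rfl⟩; exact comp_mem_B0r hSr r) isClosed_closure hy
    obtain ⟨b, hbM, w, -, hyw⟩ := hM.exists_eq_mul_of_mem_B0l (adjoint_mem_B0l hstar hyr)
    refine ⟨a, haM, adjoint b, hstar b hbM, adjoint w, ?_⟩
    rw [← adjoint_comp, ← mul_def b w, ← hyw, adjoint_adjoint]; rfl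
  · rintro ⟨A, hA, B, hB, T, rfl⟩
    exact ⟨subset_closure (Submodule.subset_span ⟨A, hA, T.comp B, rfl⟩),
      subset_closure (Submodule.subset_span ⟨B, hB, A.comp T, (comp_assoc _ _ _).symm⟩)⟩

theorem stmt0 {H : Type*} [NormedAddCommGroup H] [InnerProductSpace ℂ H] [CompleteSpace H]
    (M : Set (H →L[ℂ] H)) (hM : IsHilbertModule H M) :
    (0 : H →L[ℂ] H) ∈ B0l (H := H) M ∩ B0r (K := H) M ∧
    (∀ A B : H →L[ℂ] H, A ∈ B0l (H := H) M ∩ B0r (K := H) M →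
      B ∈ B0l (H := H) M ∩ B0r (K := H) M → A + B ∈ B0l (H := H) M ∩ B0r (K := H) M) ∧
    (∀ (c : ℂ) (A : H →L[ℂ] H), A ∈ B0l (H := H) M ∩ B0r (K := H) M →
      c • A ∈ B0l (H := H) M ∩ B0r (K := H) M) ∧
    (∀ A B : H →L[ℂ] H, A ∈ B0l (H := H) M ∩ B0r (K := H) M →
      B ∈ B0l (H := H) M ∩ B0r (K := H) M → A.comp B ∈ B0l (H := H) M ∩ B0r (K := H) M) ∧
    (∀ A : H →L[ℂ] H, A ∈ B0l (H := H) M ∩ B0r (K := H) M →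
      ContinuousLinearMap.adjoint A ∈ B0l (H := H) M ∩ B0r (K := H) M) ∧
    IsClosed (B0l (H := H) M ∩ B0r (K := H) M) ∧
    (∀ S : H →L[ℂ] H, S ∈ B0l (H := H) M ∩ B0r (K := H) M ↔
      ∃ A ∈ M, ∃ B ∈ M, ∃ T : H →L[ℂ] H, S = A.comp (T.comp B)) := by
  have hstar : ∀ A ∈ M, adjoint A ∈ M := fun A hA => hM.star_mem hA
  exact ⟨⟨(B0lSubmodule M).zero_mem, (B0rSubmodule M).zero_mem⟩,
    fun A B hA hB => ⟨(B0lSubmodule M).add_mem hA.1 hB.1, (B0rSubmodule M).add_mem hA.2 hB.2⟩,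
    fun c A hA => ⟨(B0lSubmodule M).smul_mem c hA.1, (B0rSubmodule M).smul_mem c hA.2⟩,
    fun A B hA hB => ⟨comp_mem_B0l hA.1 B, comp_mem_B0r hB.2 A⟩,
    fun A hA => ⟨adjoint_mem_B0l hstar hA.2, adjoint_mem_B0r hstar hA.1⟩,
    isClosed_closure.inter isClosed_closure, fun S => hM.mem_B0l_inter_B0r_iff⟩

end
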